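/- arXiv:1711.06364 — 2 statements merged into one kernel-verified Lean document; each statement's English description precedes it below -/
import Mathlib

section
/- Let r₁, r₂ > 0 with r₁ + r₂ = 1 and β > 0, and set 𝖲 = (√r₁−√r₂)² + 4r₁r₂β². If β ≤ (r₁r₂)^{-1/4}, then P attains its minimum over [0,1)×[0,1) at (a,b) = (0,0) and min P = r₁r₂β²/2. If β > (r₁r₂)^{-1/4}, then P attains its minimum over [0,1)×[0,1) at (a,b) = (1 − (√𝖲 − √r₁ + √r₂)/(2√r₁·r₂·β²), 1 − (√𝖲 + √r₁ − √r₂)/(2r₁·√r₂·β²)), and min P = ((√r₁+√r₂)√𝖲 − √(r₁r₂) − 1)/2 − ((r₁−r₂)/4)·log((√𝖲+√r₁−√r₂)/(√𝖲−√r₁+√r₂)) − (r₂/4)·log r₁ − (r₁/4)·log r₂ − (1/2)·log β. -/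
open Real

/-- For `r₁, r₂ > 0` with `r₁ + r₂ = 1` and `β > 0`, the function
`P(a,b) = (r₁/2)(a/(1−a) + log(1−a)) + (r₂/2)(b/(1−b) + log(1−b)) + (r₁r₂β²/2)(1−ab)`
on `[0,1) × [0,1)`. -/
noncomputable def ACfunc (r₁ r₂ β : ℝ) (p : ℝ × ℝ) : ℝ :=
  (r₁ / 2) * (p.1 / (1 - p.1) + Real.log (1 - p.1))
    + (r₂ / 2) * (p.2 / (1 - p.2) + Real.log (1 - p.2))
    + (r₁ * r₂ * β ^ 2 / 2) * (1 - p.1 * p.2)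

/-!
With `u = 1 - a`, `v = 1 - b` and `γ = r₁ r₂ β²`, `P` becomes
`(r₁/2)(u⁻¹ - 1 + log u) + (r₂/2)(v⁻¹ - 1 + log v) + (γ/2)(u + v - uv)` on `(0,1]²`.
Around a critical point `(u₀, v₀)` the increment of `P` is `r₁/2` and `r₂/2` times the Bregman
divergences of `u ↦ u⁻¹ + log u` at `u₀` and `v₀`, minus the cross term `(γ/2)(u - u₀)(v - v₀)`.
On `(0,1]` each divergence is at least half the square of the relative deviation, and if
`γ u₀ v₀ ≤ √(r₁ r₂)` the AM-GM inequality bounds the cross term by the sum of these two lower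
bounds, so the critical point is a global minimum. For `β ≤ (r₁ r₂)^(-1/4)` the corner
`u = v = 1` is such a point. Otherwise the interior critical point is `u₀ = 1/X`, `v₀ = 1/Y`, where
`√r₁ (X - 1) = √r₂ (Y - 1)` and `XY = √(r₁ r₂) β²`, and there `γ u₀ v₀ = √(r₁ r₂)` exactly.
-/

open Set

lemma sub_inv_div_two_le_log {x : ℝ} (hx₀ : 0 < x) (hx₁ : x ≤ 1) : (x - x⁻¹) / 2 ≤ log x := by
  have h := Real.self_le_sinh_iff.2 (neg_nonneg.2 (log_nonpos hx₀.le hx₁))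
  rw [sinh_eq, neg_neg, exp_log hx₀, exp_neg, exp_log hx₀] at h
  linarith

lemma sq_sub_one_div_two_le {t w : ℝ} (ht : 0 < t) (hw : 1 ≤ w) (htw : t ≤ w) :
    (t - 1) ^ 2 / 2 ≤ w * (t - 1) ^ 2 / t - (t - 1) + log t := by
  rcases le_total t 1 with h | h
  · have hlog := sub_inv_div_two_le_log ht h
    have hw' : (t - 1) ^ 2 / t ≤ w * (t - 1) ^ 2 / t := by gcongr; nlinarith [sq_nonneg (t - 1)]
    have key : (t - 1) ^ 2 / t - (t - 1) + (t - t⁻¹) / 2 - (t - 1) ^ 2 / 2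
        = (1 - t) ^ 3 / (2 * t) := by
      field_simp; ring
    have : 0 ≤ (1 - t) ^ 3 / (2 * t) := div_nonneg (pow_nonneg (by linarith) 3) (by positivity)
    linarith
  · have hlog := le_log_one_add_of_nonneg (x := t - 1) (by linarith)
    rw [add_sub_cancel] at hlog
    have hw' : (t - 1) ^ 2 ≤ w * (t - 1) ^ 2 / t := by
      rw [le_div_iff₀ ht]; nlinarith [sq_nonneg (t - 1)]
    have key : (t - 1) ^ 2 - (t - 1) + 2 * (t - 1) / (t - 1 + 2) - (t - 1) ^ 2 / 2
        = (t - 1) ^ 3 / (2 * (t + 1)) := by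
      field_simp; ring
    have : 0 ≤ (t - 1) ^ 3 / (2 * (t + 1)) :=
      div_nonneg (pow_nonneg (by linarith) 3) (by positivity)
    linarith

/-- The right side is the Bregman divergence of `u ↦ u⁻¹ + log u`, whose derivative at `u₀` is
`(u₀ - 1) / u₀ ^ 2`. -/
lemma sq_div_two_le_bregman {u u₀ : ℝ} (hu : u ∈ Ioc 0 1) (hu₀ : u₀ ∈ Ioc 0 1) :
    ((u - u₀) / u₀) ^ 2 / 2
      ≤ u⁻¹ + log u - (u₀⁻¹ + log u₀) + (1 - u₀) / u₀ ^ 2 * (u - u₀) := by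
  obtain ⟨hu0, hu1⟩ := hu
  obtain ⟨hu₀0, hu₀1⟩ := hu₀
  have h := sq_sub_one_div_two_le (t := u / u₀) (w := u₀⁻¹) (by positivity)
    (one_le_inv_iff₀.2 ⟨hu₀0, hu₀1⟩)
    (div_le_div_of_nonneg_right hu1 hu₀0.le |>.trans_eq (one_div _))
  rw [log_div hu0.ne' hu₀0.ne'] at h
  convert h using 1
  · field_simp
  · field_simp; ring

lemma mul_mul_le_of_le_mul {m q₁ q₂ A B : ℝ} (hm₀ : 0 ≤ m) (hm : m ≤ q₁ * q₂) :
    m * (A * B) ≤ (q₁ ^ 2 * A ^ 2 + q₂ ^ 2 * B ^ 2) / 2 := calc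
  m * (A * B) ≤ m * |A * B| := mul_le_mul_of_nonneg_left (le_abs_self _) hm₀
  _ ≤ |q₁ * q₂| * |A * B| := by gcongr; exact hm.trans (le_abs_self _)
  _ = |q₁ * A| * |q₂ * B| := by simp only [abs_mul]; ring
  _ ≤ ((q₁ * A) ^ 2 + (q₂ * B) ^ 2) / 2 := by
    nlinarith [sq_nonneg (|q₁ * A| - |q₂ * B|), sq_abs (q₁ * A), sq_abs (q₂ * B)]
  _ = _ := by ring

lemma le_rpow_neg_quarter_iff {c β : ℝ} (hc : 0 < c) (hβ : 0 < β) :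
    β ≤ (c ^ 2) ^ (-(1:ℝ)/4) ↔ c * β ^ 2 ≤ 1 := by
  have h : (c ^ 2) ^ (-(1:ℝ)/4) = 1 / √c := by
    rw [one_div, sqrt_eq_rpow, ← rpow_neg hc.le, ← rpow_natCast, ← rpow_mul hc.le]; norm_num
  rw [h, le_div_iff₀ (sqrt_pos.2 hc), ← sq_le_one_iff₀ (by positivity), mul_pow, sq_sqrt hc.le,
    mul_comm]

lemma rpow_neg_quarter_lt_iff {c β : ℝ} (hc : 0 < c) (hβ : 0 < β) :
    (c ^ 2) ^ (-(1:ℝ)/4) < β ↔ 1 < c * β ^ 2 := by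
  simpa only [not_le] using (le_rpow_neg_quarter_iff hc hβ).not

lemma one_sub_mem_Ico_iff {u : ℝ} : 1 - u ∈ Ico (0 : ℝ) 1 ↔ u ∈ Ioc 0 1 := by
  rw [sub_mem_Ico_iff_right, sub_self, sub_zero]

lemma one_sub_mem_Ioc_iff {u : ℝ} : 1 - u ∈ Ioc (0 : ℝ) 1 ↔ u ∈ Ico 0 1 := by
  rw [sub_mem_Ioc_iff_right, sub_self, sub_zero]

noncomputable def ACfuncOneSub (r₁ r₂ γ u v : ℝ) : ℝ :=
  r₁ / 2 * (u⁻¹ - 1 + log u) + r₂ / 2 * (v⁻¹ - 1 + log v) + γ / 2 * (u + v - u * v)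

lemma ACfunc_one_sub (r₁ r₂ β : ℝ) {u v : ℝ} (hu : u ≠ 0) (hv : v ≠ 0) :
    ACfunc r₁ r₂ β (1 - u, 1 - v) = ACfuncOneSub r₁ r₂ (r₁ * r₂ * β ^ 2) u v := by
  simp only [ACfunc, ACfuncOneSub, sub_sub_cancel]
  field_simp
  ring

lemma ACfuncOneSub_le_of_crit {q₁ q₂ γ u₀ v₀ u v : ℝ} (hγ : 0 ≤ γ)
    (hu₀ : u₀ ∈ Ioc 0 1) (hv₀ : v₀ ∈ Ioc 0 1)
    (hcrit₁ : q₁ ^ 2 * (1 - u₀) = γ * u₀ ^ 2 * (1 - v₀))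
    (hcrit₂ : q₂ ^ 2 * (1 - v₀) = γ * v₀ ^ 2 * (1 - u₀))
    (hm : γ * u₀ * v₀ ≤ q₁ * q₂) (hu : u ∈ Ioc 0 1) (hv : v ∈ Ioc 0 1) :
    ACfuncOneSub (q₁ ^ 2) (q₂ ^ 2) γ u₀ v₀ ≤ ACfuncOneSub (q₁ ^ 2) (q₂ ^ 2) γ u v := by
  have hu₀0 : u₀ ≠ 0 := hu₀.1.ne'
  have hv₀0 : v₀ ≠ 0 := hv₀.1.ne'
  have hA := mul_le_mul_of_nonneg_left (sq_div_two_le_bregman hu hu₀)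
    (by positivity : 0 ≤ q₁ ^ 2 / 2)
  have hB := mul_le_mul_of_nonneg_left (sq_div_two_le_bregman hv hv₀)
    (by positivity : 0 ≤ q₂ ^ 2 / 2)
  have hAB := mul_mul_le_of_le_mul (A := (u - u₀) / u₀) (B := (v - v₀) / v₀)
    (by have := hu₀.1; have := hv₀.1; positivity) hm
  have hcross : γ * u₀ * v₀ * ((u - u₀) / u₀ * ((v - v₀) / v₀)) = γ * (u - u₀) * (v - v₀) := by
    field_simp
  have hcrit₁' : q₁ ^ 2 * ((1 - u₀) / u₀ ^ 2) = γ * (1 - v₀) := by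
    field_simp; linear_combination hcrit₁
  have hcrit₂' : q₂ ^ 2 * ((1 - v₀) / v₀ ^ 2) = γ * (1 - u₀) := by
    field_simp; linear_combination hcrit₂
  have hsplit : ACfuncOneSub (q₁ ^ 2) (q₂ ^ 2) γ u v - ACfuncOneSub (q₁ ^ 2) (q₂ ^ 2) γ u₀ v₀
      = q₁ ^ 2 / 2 * (u⁻¹ + log u - (u₀⁻¹ + log u₀) + (1 - u₀) / u₀ ^ 2 * (u - u₀))
        + q₂ ^ 2 / 2 * (v⁻¹ + log v - (v₀⁻¹ + log v₀) + (1 - v₀) / v₀ ^ 2 * (v - v₀))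
        - γ / 2 * ((u - u₀) * (v - v₀)) := by
    unfold ACfuncOneSub
    linear_combination (-(u - u₀) / 2) * hcrit₁' - (v - v₀) / 2 * hcrit₂'
  linarith

lemma isMinOn_ACfunc_of_crit {q₁ q₂ β u₀ v₀ : ℝ} (hu₀ : u₀ ∈ Ioc 0 1) (hv₀ : v₀ ∈ Ioc 0 1)
    (hcrit₁ : q₁ ^ 2 * (1 - u₀) = q₁ ^ 2 * q₂ ^ 2 * β ^ 2 * u₀ ^ 2 * (1 - v₀))
    (hcrit₂ : q₂ ^ 2 * (1 - v₀) = q₁ ^ 2 * q₂ ^ 2 * β ^ 2 * v₀ ^ 2 * (1 - u₀))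
    (hm : q₁ ^ 2 * q₂ ^ 2 * β ^ 2 * u₀ * v₀ ≤ q₁ * q₂) :
    IsMinOn (ACfunc (q₁ ^ 2) (q₂ ^ 2) β) (Ico 0 1 ×ˢ Ico 0 1) (1 - u₀, 1 - v₀) := by
  refine isMinOn_iff.2 ?_
  rintro ⟨a, b⟩ ⟨ha, hb⟩
  have hu := one_sub_mem_Ioc_iff.2 ha
  have hv := one_sub_mem_Ioc_iff.2 hb
  have hab : (a, b) = (1 - (1 - a), 1 - (1 - b)) := by simp only [sub_sub_cancel]
  rw [hab, ACfunc_one_sub _ _ _ hu₀.1.ne' hv₀.1.ne', ACfunc_one_sub _ _ _ hu.1.ne' hv.1.ne']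
  exact ACfuncOneSub_le_of_crit (by positivity) hu₀ hv₀ hcrit₁ hcrit₂ hm hu hv

section BalancedPoint

variable {q₁ q₂ β X Y : ℝ}

lemma crit_of_balanced (hX : X ≠ 0) (hY : Y ≠ 0) (hbal : q₁ * (X - 1) = q₂ * (Y - 1))
    (hprod : X * Y = q₁ * q₂ * β ^ 2) :
    q₁ ^ 2 * (1 - X⁻¹) = q₁ ^ 2 * q₂ ^ 2 * β ^ 2 * X⁻¹ ^ 2 * (1 - Y⁻¹) := by
  field_simp
  linear_combination q₁ ^ 2 * (X - 1) * hprod + q₁ ^ 2 * q₂ * β ^ 2 * hbal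

lemma ACfuncOneSub_inv_inv (hq₁ : 0 < q₁) (hq₂ : 0 < q₂) (hβ : 0 < β) (hX : 0 < X) (hY : 0 < Y)
    (hsum : q₁ ^ 2 + q₂ ^ 2 = 1) (hprod : X * Y = q₁ * q₂ * β ^ 2) :
    ACfuncOneSub (q₁ ^ 2) (q₂ ^ 2) (q₁ ^ 2 * q₂ ^ 2 * β ^ 2) X⁻¹ Y⁻¹
      = ((q₁ + q₂) * (q₁ * X + q₂ * Y) - q₁ * q₂ - 1) / 2
        - (q₁ ^ 2 - q₂ ^ 2) / 4 * log (q₁ * X / (q₂ * Y))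
        - q₂ ^ 2 / 4 * log (q₁ ^ 2) - q₁ ^ 2 / 4 * log (q₂ ^ 2) - 1 / 2 * log β := by
  have hlog : log X + log Y = log q₁ + log q₂ + 2 * log β := by
    rw [← log_mul hX.ne' hY.ne', hprod, log_mul (by positivity) (by positivity),
      log_mul hq₁.ne' hq₂.ne', log_pow]
    push_cast; ring
  have hγX : q₁ ^ 2 * q₂ ^ 2 * β ^ 2 * X⁻¹ = q₁ * q₂ * Y := by
    field_simp
    linear_combination -hprod
  have hγY : q₁ ^ 2 * q₂ ^ 2 * β ^ 2 * Y⁻¹ = q₁ * q₂ * X := by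
    field_simp
    linear_combination -hprod
  have hγXY : q₁ ^ 2 * q₂ ^ 2 * β ^ 2 * (X⁻¹ * Y⁻¹) = q₁ * q₂ := by
    field_simp
    linear_combination -hprod
  simp only [ACfuncOneSub, inv_inv, log_inv,
    log_div (by positivity : q₁ * X ≠ 0) (by positivity : q₂ * Y ≠ 0),
    log_mul hq₁.ne' hX.ne', log_mul hq₂.ne' hY.ne', log_pow]
  linear_combination hγX / 2 + hγY / 2 - hγXY / 2 - (q₁ ^ 2 + q₂ ^ 2) / 4 * hlog
    - (1 + log β) / 2 * hsum

end BalancedPoint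

lemma ACfunc_isMinOn_critical {q₁ q₂ β σ : ℝ} (hq₁ : 0 < q₁) (hq₂ : 0 < q₂) (hβ : 0 < β)
    (hsum : q₁ ^ 2 + q₂ ^ 2 = 1) (hσ₀ : 0 ≤ σ)
    (hσ : σ ^ 2 = (q₁ - q₂) ^ 2 + 4 * q₁ ^ 2 * q₂ ^ 2 * β ^ 2) (hbig : 1 < q₁ * q₂ * β ^ 2) :
    let p₀ : ℝ × ℝ := (1 - (σ - q₁ + q₂) / (2 * q₁ * q₂ ^ 2 * β ^ 2),
      1 - (σ + q₁ - q₂) / (2 * q₁ ^ 2 * q₂ * β ^ 2))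
    p₀ ∈ Ico 0 1 ×ˢ Ico 0 1 ∧ IsMinOn (ACfunc (q₁ ^ 2) (q₂ ^ 2) β) (Ico 0 1 ×ˢ Ico 0 1) p₀ ∧
      ACfunc (q₁ ^ 2) (q₂ ^ 2) β p₀ = ((q₁ + q₂) * σ - q₁ * q₂ - 1) / 2
        - (q₁ ^ 2 - q₂ ^ 2) / 4 * log ((σ + q₁ - q₂) / (σ - q₁ + q₂))
        - q₂ ^ 2 / 4 * log (q₁ ^ 2) - q₁ ^ 2 / 4 * log (q₂ ^ 2) - 1 / 2 * log β := by
  intro p₀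
  obtain ⟨X, hXdef⟩ : ∃ X, 2 * q₁ * X = σ + q₁ - q₂ := ⟨(σ + q₁ - q₂) / (2 * q₁), by field_simp⟩
  obtain ⟨Y, hYdef⟩ : ∃ Y, 2 * q₂ * Y = σ - q₁ + q₂ := ⟨(σ - q₁ + q₂) / (2 * q₂), by field_simp⟩
  have hσbig : q₁ + q₂ < σ := by
    refine lt_of_pow_lt_pow_left₀ 2 hσ₀ ?_
    nlinarith [mul_pos hq₁ hq₂]
  have hX : 1 < X := by nlinarith
  have hY : 1 < Y := by nlinarith
  have hprod : X * Y = q₁ * q₂ * β ^ 2 := by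
    apply mul_left_cancel₀ (by positivity : 4 * q₁ * q₂ ≠ 0)
    linear_combination (σ - q₁ + q₂) * hXdef + 2 * q₁ * X * hYdef + hσ
  have hbal : q₁ * (X - 1) = q₂ * (Y - 1) := by linear_combination hXdef / 2 - hYdef / 2
  have hp₀ : p₀ = (1 - X⁻¹, 1 - Y⁻¹) := by
    simp only [p₀, ← hXdef, ← hYdef]
    congr 2
    · field_simp
      linear_combination hprod
    · field_simp
      linear_combination hprod
  have hX₀ : 0 < X := by linarith
  have hY₀ : 0 < Y := by linarith
  have hXinv : X⁻¹ ∈ Ioc 0 1 := ⟨by positivity, inv_le_one_of_one_le₀ hX.le⟩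
  have hYinv : Y⁻¹ ∈ Ioc 0 1 := ⟨by positivity, inv_le_one_of_one_le₀ hY.le⟩
  rw [hp₀]
  refine ⟨⟨one_sub_mem_Ico_iff.2 hXinv, one_sub_mem_Ico_iff.2 hYinv⟩,
    isMinOn_ACfunc_of_crit hXinv hYinv (crit_of_balanced hX₀.ne' hY₀.ne' hbal hprod) ?_ ?_, ?_⟩
  · linear_combination
      crit_of_balanced (β := β) hY₀.ne' hX₀.ne' hbal.symm (by linear_combination hprod)
  · field_simp
    exact hprod.ge
  · rw [ACfunc_one_sub _ _ _ hXinv.1.ne' hYinv.1.ne',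
      ACfuncOneSub_inv_inv hq₁ hq₂ hβ hX₀ hY₀ hsum hprod]
    have hsumXY : q₁ * X + q₂ * Y = σ := by linear_combination (hXdef + hYdef) / 2
    have hratio : q₁ * X / (q₂ * Y) = (σ + q₁ - q₂) / (σ - q₁ + q₂) := by
      rw [← hXdef, ← hYdef, mul_assoc, mul_assoc, mul_div_mul_left _ _ two_ne_zero]
    rw [hsumXY, hratio]

theorem stmt_5 (r₁ r₂ β : ℝ) (hr₁ : 0 < r₁) (hr₂ : 0 < r₂) (hsum : r₁ + r₂ = 1)
    (hβ : 0 < β) :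
    (β ≤ (r₁ * r₂) ^ (-(1:ℝ)/4) →
      ((0,0) ∈ Set.Ico (0:ℝ) 1 ×ˢ Set.Ico (0:ℝ) 1 ∧
        (∀ p ∈ Set.Ico (0:ℝ) 1 ×ˢ Set.Ico (0:ℝ) 1, ACfunc r₁ r₂ β (0,0) ≤ ACfunc r₁ r₂ β p) ∧
        ACfunc r₁ r₂ β (0,0) = r₁ * r₂ * β ^ 2 / 2)) ∧
    (β > (r₁ * r₂) ^ (-(1:ℝ)/4) →
      (let S : ℝ := (Real.sqrt r₁ - Real.sqrt r₂) ^ 2 + 4 * r₁ * r₂ * β ^ 2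
       let p₀ : ℝ × ℝ :=
         (1 - (Real.sqrt S - Real.sqrt r₁ + Real.sqrt r₂) / (2 * Real.sqrt r₁ * r₂ * β ^ 2),
          1 - (Real.sqrt S + Real.sqrt r₁ - Real.sqrt r₂) / (2 * r₁ * Real.sqrt r₂ * β ^ 2))
       p₀ ∈ Set.Ico (0:ℝ) 1 ×ˢ Set.Ico (0:ℝ) 1 ∧
        (∀ p ∈ Set.Ico (0:ℝ) 1 ×ˢ Set.Ico (0:ℝ) 1, ACfunc r₁ r₂ β p₀ ≤ ACfunc r₁ r₂ β p) ∧
        ACfunc r₁ r₂ β p₀ =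
          ((Real.sqrt r₁ + Real.sqrt r₂) * Real.sqrt S - Real.sqrt (r₁ * r₂) - 1) / 2
            - ((r₁ - r₂) / 4) * Real.log ((Real.sqrt S + Real.sqrt r₁ - Real.sqrt r₂)
                / (Real.sqrt S - Real.sqrt r₁ + Real.sqrt r₂))
            - (r₂ / 4) * Real.log r₁ - (r₁ / 4) * Real.log r₂
            - (1 / 2) * Real.log β)) := by
  obtain ⟨q₁, hq₁, rfl⟩ : ∃ q, 0 < q ∧ q ^ 2 = r₁ := ⟨√r₁, sqrt_pos.2 hr₁, sq_sqrt hr₁.le⟩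
  obtain ⟨q₂, hq₂, rfl⟩ : ∃ q, 0 < q ∧ q ^ 2 = r₂ := ⟨√r₂, sqrt_pos.2 hr₂, sq_sqrt hr₂.le⟩
  have hq : 0 < q₁ * q₂ := mul_pos hq₁ hq₂
  rw [← mul_pow, gt_iff_lt, le_rpow_neg_quarter_iff hq hβ, rpow_neg_quarter_lt_iff hq hβ]
  simp only [sqrt_sq hq₁.le, sqrt_sq hq₂.le, sqrt_sq hq.le]
  constructor
  · intro hsmall
    have hmin := isMinOn_ACfunc_of_crit (q₁ := q₁) (q₂ := q₂) (β := β) (u₀ := 1) (v₀ := 1)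
      ⟨one_pos, le_rfl⟩ ⟨one_pos, le_rfl⟩ (by ring) (by ring) (by nlinarith)
    rw [sub_self] at hmin
    exact ⟨⟨⟨le_rfl, one_pos⟩, le_rfl, one_pos⟩, isMinOn_iff.1 hmin, by simp [ACfunc, mul_pow]⟩
  · intro hbig
    obtain ⟨hmem, hmin, hval⟩ := ACfunc_isMinOn_critical hq₁ hq₂ hβ hsum (sqrt_nonneg _)
      (sq_sqrt (by positivity)) hbig
    exact ⟨hmem, isMinOn_iff.1 hmin, hval⟩
end

section
/- Let n be a positive integer, let μ₁ ≥ μ₂ ≥ ⋯ ≥ μ_n ≥ 0 be real numbers, and let α ≥ 0 and B > 0 be reals. Then the equation (1/n)·Σ_{i=1}^{n} 1/(γ − μ_i) = B²/(α + √(α² + γB²)) has exactly one solution γ in the interval (μ₁, ∞). -/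
/-!
Multiplying the equation by `γ > 0` and rationalizing
`γB² / (α + √(α² + γB²)) = √(α² + γB²) - α` turns it into `F(γ) = 0` for
`F(γ) = (1/n) Σ γ/(γ - μᵢ) - (√(α² + γB²) - α)`. Each `γ/(γ - μᵢ) = 1 + μᵢ/(γ - μᵢ)` is
nonincreasing since `μᵢ ≥ 0`, and the square root is strictly increasing, so `F` is strictly
decreasing on `(μ₁, ∞)`. Just right of `μ₁`, `F` is positive: for `μ₁ > 0` the term `i = 1` blows
up, and for `μ₁ = 0` the mean is `1` while the square-root side tends to `√(α²) - α = 0`. For large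
`γ` the mean stays bounded while the square root grows, so `F < 0`; the intermediate value theorem
gives exactly one zero.
-/

open Set Filter Topology

theorem existsUnique_zero_of_strictAntiOn_Ioi {g : ℝ → ℝ} {a : ℝ}
    (hcont : ContinuousOn g (Ioi a)) (hanti : StrictAntiOn g (Ioi a))
    (hleft : ∀ᶠ x in 𝓝[>] a, 0 < g x) (hright : ∀ᶠ x in atTop, g x < 0) :
    ∃! x, x ∈ Ioi a ∧ g x = 0 := by
  obtain ⟨x, hxpos, hx⟩ := (hleft.and self_mem_nhdsWithin).exists
  obtain ⟨y, hyneg, hxy⟩ := (hright.and (eventually_gt_atTop x)).exists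
  have hIcc : Icc x y ⊆ Ioi a := fun z hz => lt_of_lt_of_le hx hz.1
  obtain ⟨z, hz, hgz⟩ := intermediate_value_Icc' hxy.le (hcont.mono hIcc) ⟨hyneg.le, hxpos.le⟩
  exact ⟨z, ⟨hIcc hz, hgz⟩, fun w ⟨hw, hgw⟩ => hanti.injOn hw (hIcc hz) (hgw.trans hgz.symm)⟩

theorem antitoneOn_div_sub {μ : ℝ} (hμ : 0 ≤ μ) : AntitoneOn (fun γ => γ / (γ - μ)) (Ioi μ) := by
  intro x hx y hy hxy
  rw [mem_Ioi] at hx hy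
  dsimp only
  rw [div_le_div_iff₀ (sub_pos.2 hy) (sub_pos.2 hx)]
  nlinarith

theorem one_le_div_sub {μ γ : ℝ} (hμ : 0 ≤ μ) (hγ : μ < γ) : 1 ≤ γ / (γ - μ) :=
  (one_le_div (sub_pos.2 hγ)).2 (by linarith)

theorem tendsto_div_sub_nhdsGT {μ : ℝ} (hμ : 0 < μ) :
    Tendsto (fun γ => γ / (γ - μ)) (𝓝[>] μ) atTop := by
  have hsub : Tendsto (fun γ => γ - μ) (𝓝[>] μ) (𝓝[>] 0) := by
    refine tendsto_nhdsWithin_of_tendsto_nhds_of_eventually_within _ ?_ ?_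
    · simpa using (continuous_sub_right μ).continuousWithinAt.tendsto (s := Ioi μ) (x := μ)
    · filter_upwards [self_mem_nhdsWithin] with γ hγ using sub_pos.2 (mem_Ioi.1 hγ)
  exact (tendsto_nhdsWithin_of_tendsto_nhds tendsto_id).pos_mul_atTop hμ
    hsub.inv_tendsto_nhdsGT_zero

section Sqrt

variable {α B : ℝ}

theorem div_add_sqrt_sq_add {x : ℝ} (hx : 0 < x) :
    x / (α + √(α ^ 2 + x)) = √(α ^ 2 + x) - α := by
  have hlt : |α| < √(α ^ 2 + x) := by
    rw [← Real.sqrt_sq_eq_abs]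
    exact Real.sqrt_lt_sqrt (sq_nonneg α) (by linarith)
  have hsq := Real.sq_sqrt (show 0 ≤ α ^ 2 + x by positivity)
  rw [div_eq_iff (by linarith [neg_abs_le α])]
  nlinarith

theorem strictMonoOn_sqrt_sq_add_mul_sub (hB : B ≠ 0) :
    StrictMonoOn (fun γ => √(α ^ 2 + γ * B ^ 2) - α) (Ici 0) := by
  intro x hx y _ hxy
  have hB2 : 0 < B ^ 2 := by positivity
  have := Real.sqrt_lt_sqrt (by have := mem_Ici.1 hx; positivity)
    (show α ^ 2 + x * B ^ 2 < α ^ 2 + y * B ^ 2 by nlinarith)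
  simpa using this

theorem tendsto_sqrt_sq_add_mul_sub_atTop (hB : B ≠ 0) :
    Tendsto (fun γ => √(α ^ 2 + γ * B ^ 2) - α) atTop atTop :=
  tendsto_atTop_add_const_right _ _ <| Real.tendsto_sqrt_atTop.comp <|
    tendsto_atTop_add_const_left _ _ <| tendsto_id.atTop_mul_const (by positivity)

end Sqrt

section Sum

variable {ι : Type*} {s : Finset ι} {μ : ι → ℝ} {m : ℝ}

theorem antitoneOn_sum_div_sub (h0 : ∀ i ∈ s, 0 ≤ μ i) (hm : ∀ i ∈ s, μ i ≤ m) :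
    AntitoneOn (fun γ => ∑ i ∈ s, γ / (γ - μ i)) (Ioi m) := fun _ hx _ hy hxy =>
  Finset.sum_le_sum fun i hi => antitoneOn_div_sub (h0 i hi)
    (lt_of_le_of_lt (hm i hi) hx) (lt_of_le_of_lt (hm i hi) hy) hxy

theorem card_le_sum_div_sub (h0 : ∀ i ∈ s, 0 ≤ μ i) (hm : ∀ i ∈ s, μ i ≤ m) {γ : ℝ} (hγ : m < γ) :
    (s.card : ℝ) ≤ ∑ i ∈ s, γ / (γ - μ i) := by
  simpa using s.card_nsmul_le_sum _ 1 fun i hi => one_le_div_sub (h0 i hi) ((hm i hi).trans_lt hγ)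

theorem tendsto_sum_div_sub_nhdsGT (h0 : ∀ i ∈ s, 0 ≤ μ i) (hm : ∀ i ∈ s, μ i ≤ m)
    {j : ι} (hj : j ∈ s) (hjm : μ j = m) (hm0 : 0 < m) :
    Tendsto (fun γ => ∑ i ∈ s, γ / (γ - μ i)) (𝓝[>] m) atTop := by
  subst hjm
  refine tendsto_atTop_mono' _ ?_ (tendsto_div_sub_nhdsGT hm0)
  filter_upwards [self_mem_nhdsWithin] with γ hγ
  exact Finset.single_le_sum (fun i hi => zero_le_one.trans
    (one_le_div_sub (h0 i hi) ((hm i hi).trans_lt hγ))) hj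

theorem continuousOn_sum_div_sub (hm : ∀ i ∈ s, μ i ≤ m) :
    ContinuousOn (fun γ => ∑ i ∈ s, γ / (γ - μ i)) (Ioi m) :=
  continuousOn_finsetSum _ fun i hi => continuousOn_id.div (continuousOn_id.sub continuousOn_const)
    fun _ hγ => (sub_pos.2 ((hm i hi).trans_lt hγ)).ne'

end Sum

noncomputable def secularFun {ι : Type*} (s : Finset ι) (μ : ι → ℝ) (α B γ : ℝ) : ℝ :=
  1 / (s.card : ℝ) * ∑ i ∈ s, γ / (γ - μ i) - (√(α ^ 2 + γ * B ^ 2) - α)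

section Secular

variable {ι : Type*} {s : Finset ι} {μ : ι → ℝ} {m α B : ℝ}

theorem secularFun_eq_zero_iff {γ : ℝ} (hγ : 0 < γ) (hB : B ≠ 0) :
    secularFun s μ α B γ = 0 ↔
      1 / (s.card : ℝ) * ∑ i ∈ s, 1 / (γ - μ i) = B ^ 2 / (α + √(α ^ 2 + γ * B ^ 2)) := by
  have hscale : γ * (1 / (s.card : ℝ) * ∑ i ∈ s, 1 / (γ - μ i))
      = 1 / (s.card : ℝ) * ∑ i ∈ s, γ / (γ - μ i) := by
    simp only [Finset.mul_sum, mul_one_div]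
    exact Finset.sum_congr rfl fun i _ => by ring
  rw [secularFun, sub_eq_zero, ← hscale, ← div_add_sqrt_sq_add (by positivity), mul_div_assoc,
    mul_right_inj' hγ.ne']

theorem continuousOn_secularFun (hm : ∀ i ∈ s, μ i ≤ m) :
    ContinuousOn (secularFun s μ α B) (Ioi m) :=
  (continuousOn_const.mul (continuousOn_sum_div_sub hm)).sub (by fun_prop)

theorem strictAntiOn_secularFun (h0 : ∀ i ∈ s, 0 ≤ μ i) (hm : ∀ i ∈ s, μ i ≤ m) (hm0 : 0 ≤ m)
    (hB : B ≠ 0) : StrictAntiOn (secularFun s μ α B) (Ioi m) := by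
  intro x hx y hy hxy
  have hmean := mul_le_mul_of_nonneg_left (antitoneOn_sum_div_sub h0 hm hx hy hxy.le)
    (show 0 ≤ 1 / (s.card : ℝ) by positivity)
  have hsqrt := strictMonoOn_sqrt_sq_add_mul_sub (α := α) hB
    (mem_Ici.2 (hm0.trans (le_of_lt hx))) (mem_Ici.2 (hm0.trans (le_of_lt hy))) hxy
  simp only [secularFun] at hmean hsqrt ⊢
  linarith

theorem eventually_secularFun_pos_nhdsGT (h0 : ∀ i ∈ s, 0 ≤ μ i) (hm : ∀ i ∈ s, μ i ≤ m)
    {j : ι} (hj : j ∈ s) (hjm : μ j = m) (hα : 0 ≤ α) :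
    ∀ᶠ γ in 𝓝[>] m, 0 < secularFun s μ α B γ := by
  have hr : Tendsto (fun γ => √(α ^ 2 + γ * B ^ 2) - α) (𝓝[>] m) (𝓝 (√(α ^ 2 + m * B ^ 2) - α)) :=
    ((by fun_prop : Continuous fun γ => √(α ^ 2 + γ * B ^ 2) - α).tendsto m).mono_left
      nhdsWithin_le_nhds
  have hcard : (0 : ℝ) < s.card := by exact_mod_cast Finset.card_pos.2 ⟨j, hj⟩
  rcases (hjm ▸ h0 j hj).eq_or_lt with hm0 | hm0
  · have hr0 : √(α ^ 2 + m * B ^ 2) - α = 0 := by simp [← hm0, Real.sqrt_sq hα]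
    filter_upwards [hr.eventually (gt_mem_nhds (hr0 ▸ zero_lt_one)), self_mem_nhdsWithin]
      with γ hγr hγ
    have := mul_le_mul_of_nonneg_left (card_le_sum_div_sub h0 hm hγ) (one_div_nonneg.2 hcard.le)
    rw [one_div_mul_cancel hcard.ne'] at this
    simp only [secularFun]
    linarith
  · have hmean := (tendsto_sum_div_sub_nhdsGT h0 hm hj hjm hm0).const_mul_atTop
      (one_div_pos.2 hcard)
    filter_upwards [hmean.eventually_gt_atTop (√(α ^ 2 + m * B ^ 2) - α + 1),
      hr.eventually (gt_mem_nhds (lt_add_one _))] with γ hγmean hγr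
    simp only [secularFun]
    linarith

theorem eventually_secularFun_neg_atTop (h0 : ∀ i ∈ s, 0 ≤ μ i) (hm : ∀ i ∈ s, μ i ≤ m)
    (hB : B ≠ 0) : ∀ᶠ γ in atTop, secularFun s μ α B γ < 0 := by
  filter_upwards [eventually_ge_atTop (m + 1),
    (tendsto_sqrt_sq_add_mul_sub_atTop (α := α) hB).eventually_gt_atTop
      (1 / (s.card : ℝ) * ∑ i ∈ s, (m + 1) / (m + 1 - μ i))] with γ hγ hγr
  have := mul_le_mul_of_nonneg_left
    (antitoneOn_sum_div_sub h0 hm (mem_Ioi.2 (lt_add_one m)) (mem_Ioi.2 (by linarith)) hγ)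
    (show 0 ≤ 1 / (s.card : ℝ) by positivity)
  simp only [secularFun]
  linarith

end Secular

/-- The equation `(1/n)·Σ_{i=1}^{n} 1/(γ − μ_i) = B²/(α + √(α² + γB²))` has exactly one
solution `γ` in the interval `(μ₁, ∞)`, where `μ₁ ≥ μ₂ ≥ ⋯ ≥ μ_n ≥ 0`, `α ≥ 0`, `B > 0`. -/
theorem stmt_6 (n : ℕ) (hn : 1 ≤ n) (μ : ℕ → ℝ)
    (hord : ∀ i ∈ Finset.Icc 1 n, ∀ j ∈ Finset.Icc 1 n, i ≤ j → μ j ≤ μ i)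
    (hnonneg : ∀ i ∈ Finset.Icc 1 n, 0 ≤ μ i)
    (α B : ℝ) (hα : 0 ≤ α) (hB : 0 < B) :
    ∃! γ : ℝ, γ ∈ Set.Ioi (μ 1) ∧
      (1 / (n : ℝ)) * ∑ i ∈ Finset.Icc 1 n, 1 / (γ - μ i)
        = B ^ 2 / (α + Real.sqrt (α ^ 2 + γ * B ^ 2)) := by
  have h1 : 1 ∈ Finset.Icc 1 n := Finset.mem_Icc.2 ⟨le_rfl, hn⟩
  have hmax : ∀ i ∈ Finset.Icc 1 n, μ i ≤ μ 1 := fun i hi => hord 1 h1 i hi (Finset.mem_Icc.1 hi).1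
  have hcard : ((Finset.Icc 1 n).card : ℝ) = n := by simp
  refine (existsUnique_congr fun γ => and_congr_right fun hγ => ?_).1
    (existsUnique_zero_of_strictAntiOn_Ioi (continuousOn_secularFun hmax)
      (strictAntiOn_secularFun hnonneg hmax (hnonneg 1 h1) hB.ne')
      (eventually_secularFun_pos_nhdsGT hnonneg hmax h1 rfl hα)
      (eventually_secularFun_neg_atTop hnonneg hmax hB.ne'))
  rw [secularFun_eq_zero_iff ((hnonneg 1 h1).trans_lt hγ) hB.ne', hcard]
end
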